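/- If σ ∈ GL(2g₀,ℝ) is symmetric positive definite, then the symplectic matrix P⁻¹(σ) = G⁻¹(σ, −J(σ⁻¹)ᵀJ) is symmetric positive definite. Hence P restricts to a bijection from the symmetric positive definite symplectic matrices of the special block form onto Sym_{>0}(2g₀,ℝ). -/

import Mathlib

/-!
Conjugating by `V = diagonalizer` (with `Vᵀ V = 2`) turns every `S ∈ 𝒱` into the block diagonal
matrix `2 • diag(gg1 S, gg2 S)`, so `G = (gg1, gg2)` is a linear bijection from `𝒱` onto pairs of
matrices. Under it, positive definiteness of `S` becomes positive definiteness of both blocks, and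
the symplectic condition `Sᵀ J S = J` becomes `(gg1 S)ᵀ J (gg2 S) = J`, i.e.
`gg2 S = -J (gg1 S)⁻ᵀ J`. For `σ` positive definite, `-J σ⁻ᵀ J = Jᵀ σ⁻ᵀ J` is positive definite
as well, which gives both claims.
-/

open Matrix

/-- The space 𝒱 of 4g₀×4g₀ matrices of the block form
[[α,β,γ,δ],[β,α,−δ,−γ],[π,ρ,ξ,η],[−ρ,−π,η,ξ]]. -/
def Vspace (g₀ : ℕ) (R : Type*) [Ring R] :
    Set (Matrix ((Fin g₀ ⊕ Fin g₀) ⊕ (Fin g₀ ⊕ Fin g₀))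
      ((Fin g₀ ⊕ Fin g₀) ⊕ (Fin g₀ ⊕ Fin g₀)) R) :=
  {S | ∃ a b c d p r x e : Matrix (Fin g₀) (Fin g₀) R,
    S = Matrix.fromBlocks (Matrix.fromBlocks a b b a) (Matrix.fromBlocks c d (-d) (-c))
      (Matrix.fromBlocks p r (-r) (-p)) (Matrix.fromBlocks x e e x)}

/-- First component of the map G: [[α+β, γ−δ],[π+ρ, ξ−η]]. -/
def gg1 {g₀ : ℕ} {R : Type*} [Ring R]
    (S : Matrix ((Fin g₀ ⊕ Fin g₀) ⊕ (Fin g₀ ⊕ Fin g₀))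
      ((Fin g₀ ⊕ Fin g₀) ⊕ (Fin g₀ ⊕ Fin g₀)) R) :
    Matrix (Fin g₀ ⊕ Fin g₀) (Fin g₀ ⊕ Fin g₀) R :=
  Matrix.fromBlocks
    (S.submatrix (Sum.inl ∘ Sum.inl) (Sum.inl ∘ Sum.inl) +
      S.submatrix (Sum.inl ∘ Sum.inl) (Sum.inl ∘ Sum.inr))
    (S.submatrix (Sum.inl ∘ Sum.inl) (Sum.inr ∘ Sum.inl) -
      S.submatrix (Sum.inl ∘ Sum.inl) (Sum.inr ∘ Sum.inr))
    (S.submatrix (Sum.inr ∘ Sum.inl) (Sum.inl ∘ Sum.inl) +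
      S.submatrix (Sum.inr ∘ Sum.inl) (Sum.inl ∘ Sum.inr))
    (S.submatrix (Sum.inr ∘ Sum.inl) (Sum.inr ∘ Sum.inl) -
      S.submatrix (Sum.inr ∘ Sum.inl) (Sum.inr ∘ Sum.inr))

/-- Second component of the map G: [[α−β, γ+δ],[π−ρ, ξ+η]]. -/
def gg2 {g₀ : ℕ} {R : Type*} [Ring R]
    (S : Matrix ((Fin g₀ ⊕ Fin g₀) ⊕ (Fin g₀ ⊕ Fin g₀))
      ((Fin g₀ ⊕ Fin g₀) ⊕ (Fin g₀ ⊕ Fin g₀)) R) :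
    Matrix (Fin g₀ ⊕ Fin g₀) (Fin g₀ ⊕ Fin g₀) R :=
  Matrix.fromBlocks
    (S.submatrix (Sum.inl ∘ Sum.inl) (Sum.inl ∘ Sum.inl) -
      S.submatrix (Sum.inl ∘ Sum.inl) (Sum.inl ∘ Sum.inr))
    (S.submatrix (Sum.inl ∘ Sum.inl) (Sum.inr ∘ Sum.inl) +
      S.submatrix (Sum.inl ∘ Sum.inl) (Sum.inr ∘ Sum.inr))
    (S.submatrix (Sum.inr ∘ Sum.inl) (Sum.inl ∘ Sum.inl) -
      S.submatrix (Sum.inr ∘ Sum.inl) (Sum.inl ∘ Sum.inr))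
    (S.submatrix (Sum.inr ∘ Sum.inl) (Sum.inr ∘ Sum.inl) +
      S.submatrix (Sum.inr ∘ Sum.inl) (Sum.inr ∘ Sum.inr))

/-- The standard symplectic matrix J = [[0,Id],[−Id,0]]. -/
def Jstd (n : Type*) (R : Type*) [Ring R] [DecidableEq n] [Fintype n] :
    Matrix (n ⊕ n) (n ⊕ n) R :=
  Matrix.fromBlocks 0 1 (-1) 0

namespace Matrix

variable {m n R : Type*} [Fintype m] [Fintype n] [Ring R] [PartialOrder R] [StarRing R]
  [IsOrderedAddMonoid R]

theorem posDef_fromBlocks_zero_iff {A : Matrix m m R} {D : Matrix n n R} :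
    (fromBlocks A 0 0 D).PosDef ↔ A.PosDef ∧ D.PosDef := by
  refine ⟨fun h => ⟨?_, ?_⟩, fun ⟨hA, hD⟩ => ?_⟩
  · exact h.submatrix Sum.inl_injective
  · exact h.submatrix Sum.inr_injective
  refine PosDef.of_dotProduct_mulVec_pos (hA.1.fromBlocks (by simp) hD.1) fun x hx => ?_
  obtain ⟨y, z, rfl⟩ : ∃ y z, x = Sum.elim y z := ⟨_, _, (Sum.elim_comp_inl_inr x).symm⟩
  have hsplit : star (Sum.elim y z) ⬝ᵥ (fromBlocks A 0 0 D *ᵥ Sum.elim y z)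
      = star y ⬝ᵥ (A *ᵥ y) + star z ⬝ᵥ (D *ᵥ z) := by
    rw [fromBlocks_mulVec, Function.star_sumElim, sumElim_dotProduct_sumElim]
    simp
  rw [hsplit]
  by_cases hy : y = 0
  · subst hy
    have hz : z ≠ 0 := by rintro rfl; simp at hx
    simpa using hD.dotProduct_mulVec_pos hz
  · exact add_pos_of_pos_of_nonneg (hA.dotProduct_mulVec_pos hy)
      (hD.posSemidef.dotProduct_mulVec_nonneg z)

theorem posDef_smul_iff {n K : Type*} [Fintype n] [Field K] [LinearOrder K]
    [StarRing K] [StarOrderedRing K] {M : Matrix n n K} {c : K}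
    (hc : 0 < c) : (c • M).PosDef ↔ M.PosDef :=
  ⟨fun h => by simpa [smul_smul, hc.ne'] using h.smul (inv_pos.2 hc), fun h => h.smul hc⟩

end Matrix

section Symplectic

variable {n R : Type*} [Fintype n] [DecidableEq n] [CommRing R]

theorem Jstd_mul_Jstd : Jstd n R * Jstd n R = -1 := by
  simp [Jstd, fromBlocks_multiply, ← fromBlocks_one, fromBlocks_neg]

theorem transpose_Jstd : (Jstd n R)ᵀ = -Jstd n R := by
  simp [Jstd, fromBlocks_transpose, fromBlocks_neg]

theorem isUnit_Jstd : IsUnit (Jstd n R) :=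
  IsUnit.of_mul_eq_one (-Jstd n R) (by rw [Matrix.mul_neg, Jstd_mul_Jstd, neg_neg])

theorem transpose_mul_Jstd_mul_eq_Jstd_iff {M N : Matrix (n ⊕ n) (n ⊕ n) R}
    (hM : IsUnit M.det) :
    Mᵀ * Jstd n R * N = Jstd n R ↔ N = -(Jstd n R * (M⁻¹)ᵀ * Jstd n R) := by
  have hinv : (M⁻¹)ᵀ * Mᵀ = 1 := by rw [← transpose_mul, mul_nonsing_inv _ hM, transpose_one]
  have hinv' : Mᵀ * (M⁻¹)ᵀ = 1 := by rw [← transpose_mul, nonsing_inv_mul _ hM, transpose_one]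
  constructor
  · intro h
    calc N = -(Jstd n R * ((M⁻¹)ᵀ * Mᵀ) * Jstd n R * N) := by
          rw [hinv, Matrix.mul_one, Jstd_mul_Jstd, Matrix.neg_mul, neg_neg, Matrix.one_mul]
      _ = -(Jstd n R * (M⁻¹)ᵀ * (Mᵀ * Jstd n R * N)) := by simp only [Matrix.mul_assoc]
      _ = -(Jstd n R * (M⁻¹)ᵀ * Jstd n R) := by rw [h]
  · rintro rfl
    calc Mᵀ * Jstd n R * -(Jstd n R * (M⁻¹)ᵀ * Jstd n R)
        = -(Mᵀ * (Jstd n R * Jstd n R) * (M⁻¹)ᵀ * Jstd n R) := by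
          simp only [Matrix.mul_neg, Matrix.mul_assoc]
      _ = Jstd n R := by
          rw [Jstd_mul_Jstd, Matrix.mul_neg, Matrix.mul_one, Matrix.neg_mul, Matrix.neg_mul,
            neg_neg, hinv', Matrix.one_mul]

theorem posDef_neg_Jstd_mul_mul_Jstd [PartialOrder R] [StarRing R] {A : Matrix (n ⊕ n) (n ⊕ n) R}
    (hA : A.PosDef) : (-(Jstd n R * A * Jstd n R)).PosDef := by
  have hstar : star (Jstd n R) = -Jstd n R := by
    simp [Jstd, star_eq_conjTranspose, fromBlocks_conjTranspose, fromBlocks_neg]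
  simpa [hstar] using (IsUnit.posDef_star_left_conjugate_iff isUnit_Jstd).2 hA

end Symplectic

section Blocks

variable {g₀ : ℕ} {R : Type*} [Ring R]

theorem gg1_fromBlocks (a b c d p r x e : Matrix (Fin g₀) (Fin g₀) R) :
    gg1 (fromBlocks (fromBlocks a b b a) (fromBlocks c d (-d) (-c))
      (fromBlocks p r (-r) (-p)) (fromBlocks x e e x))
    = fromBlocks (a + b) (c - d) (p + r) (x - e) :=
  rfl

theorem gg2_fromBlocks (a b c d p r x e : Matrix (Fin g₀) (Fin g₀) R) :
    gg2 (fromBlocks (fromBlocks a b b a) (fromBlocks c d (-d) (-c))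
      (fromBlocks p r (-r) (-p)) (fromBlocks x e e x))
    = fromBlocks (a - b) (c + d) (p - r) (x + e) :=
  rfl

end Blocks

namespace Vspace

variable {g₀ : ℕ} {R : Type*} [CommRing R]

local notation "ι" => (Fin g₀ ⊕ Fin g₀) ⊕ (Fin g₀ ⊕ Fin g₀)

def diagonalizer (g₀ : ℕ) (R : Type*) [Ring R] :
    Matrix ((Fin g₀ ⊕ Fin g₀) ⊕ (Fin g₀ ⊕ Fin g₀)) ((Fin g₀ ⊕ Fin g₀) ⊕ (Fin g₀ ⊕ Fin g₀)) R :=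
  fromBlocks (fromBlocks 1 0 1 0) (fromBlocks 1 0 (-1) 0)
    (fromBlocks 0 1 0 (-1)) (fromBlocks 0 1 0 1)

local notation "V" => diagonalizer g₀ R

theorem transpose_diagonalizer_mul_diagonalizer : Vᵀ * V = (2 : R) • 1 := by
  simp [diagonalizer, fromBlocks_transpose, fromBlocks_multiply, ← fromBlocks_one,
    fromBlocks_add, two_smul]

theorem diagonalizer_mul_transpose_diagonalizer : V * Vᵀ = (2 : R) • 1 := by
  simp [diagonalizer, fromBlocks_transpose, fromBlocks_multiply, ← fromBlocks_one,
    fromBlocks_add, two_smul]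

theorem transpose_diagonalizer_mul_Jstd_mul_diagonalizer :
    Vᵀ * Jstd (Fin g₀ ⊕ Fin g₀) R * V =
      (2 : R) • fromBlocks 0 (Jstd (Fin g₀) R) (Jstd (Fin g₀) R) 0 := by
  simp [diagonalizer, Jstd, fromBlocks_transpose, fromBlocks_multiply, fromBlocks_add,
    two_smul, fromBlocks_neg]

theorem transpose_diagonalizer_mul_mul_diagonalizer {S : Matrix ι ι R} (hS : S ∈ Vspace g₀ R) :
    Vᵀ * S * V = (2 : R) • fromBlocks (gg1 S) 0 0 (gg2 S) := by
  obtain ⟨a, b, c, d, p, r, x, e, rfl⟩ := hS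
  rw [gg1_fromBlocks, gg2_fromBlocks]
  simp only [diagonalizer, fromBlocks_transpose, transpose_one, transpose_zero, transpose_neg,
    fromBlocks_multiply, fromBlocks_add, Matrix.mul_one, Matrix.one_mul, Matrix.mul_neg,
    Matrix.neg_mul, Matrix.mul_zero, Matrix.zero_mul, add_zero, zero_add, neg_zero, two_smul,
    fromBlocks_inj]
  refine ⟨⟨?_, ?_, ?_, ?_⟩, ?_, ?_, ?_, ?_, ?_, ?_⟩ <;> abel_nf
  all_goals exact fromBlocks_zero

variable [Invertible (2 : R)]

theorem isUnit_diagonalizer : IsUnit V :=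
  IsUnit.of_mul_eq_one (⅟(2 : R) • Vᵀ) (by
    rw [Matrix.mul_smul, diagonalizer_mul_transpose_diagonalizer, smul_smul, invOf_mul_self,
      one_smul])

theorem transpose_diagonalizer_mul_mul_diagonalizer_injective :
    Function.Injective fun X : Matrix ι ι R => Vᵀ * X * V := fun _ _ h =>
  ((isUnit_transpose _).2 isUnit_diagonalizer).mul_left_cancel
    (isUnit_diagonalizer.mul_right_cancel h)

def ggInv (M N : Matrix (Fin g₀ ⊕ Fin g₀) (Fin g₀ ⊕ Fin g₀) R) : Matrix ι ι R :=
  ⅟(2 : R) • (V * fromBlocks M 0 0 N * Vᵀ)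

theorem ggInv_mem (M N : Matrix (Fin g₀ ⊕ Fin g₀) (Fin g₀ ⊕ Fin g₀) R) :
    ggInv M N ∈ Vspace g₀ R := by
  obtain ⟨m₁, m₂, m₃, m₄, rfl⟩ : ∃ m₁ m₂ m₃ m₄, M = fromBlocks m₁ m₂ m₃ m₄ :=
    ⟨_, _, _, _, (fromBlocks_toBlocks M).symm⟩
  obtain ⟨n₁, n₂, n₃, n₄, rfl⟩ : ∃ n₁ n₂ n₃ n₄, N = fromBlocks n₁ n₂ n₃ n₄ :=
    ⟨_, _, _, _, (fromBlocks_toBlocks N).symm⟩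
  refine ⟨⅟(2 : R) • (m₁ + n₁), ⅟(2 : R) • (m₁ - n₁), ⅟(2 : R) • (m₂ + n₂),
    ⅟(2 : R) • (n₂ - m₂), ⅟(2 : R) • (m₃ + n₃), ⅟(2 : R) • (m₃ - n₃), ⅟(2 : R) • (m₄ + n₄),
    ⅟(2 : R) • (n₄ - m₄), ?_⟩
  simp only [ggInv, diagonalizer, fromBlocks_transpose, transpose_one, transpose_zero,
    transpose_neg, fromBlocks_multiply, fromBlocks_add, fromBlocks_smul, Matrix.mul_one,
    Matrix.one_mul, Matrix.mul_neg, Matrix.neg_mul, Matrix.mul_zero, Matrix.zero_mul, add_zero,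
    zero_add, fromBlocks_inj]
  and_intros <;> first | trivial | module

theorem transpose_diagonalizer_mul_ggInv_mul_diagonalizer
    (M N : Matrix (Fin g₀ ⊕ Fin g₀) (Fin g₀ ⊕ Fin g₀) R) :
    Vᵀ * ggInv M N * V = (2 : R) • fromBlocks M 0 0 N := by
  calc Vᵀ * ggInv M N * V = ⅟(2 : R) • ((Vᵀ * V) * fromBlocks M 0 0 N * (Vᵀ * V)) := by
        simp only [ggInv, Matrix.mul_smul, Matrix.smul_mul, Matrix.mul_assoc]
    _ = (2 : R) • fromBlocks M 0 0 N := by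
        rw [transpose_diagonalizer_mul_diagonalizer, Matrix.smul_mul, Matrix.mul_smul,
          Matrix.one_mul, Matrix.mul_one, smul_smul, smul_smul, invOf_mul_self, one_mul]

theorem gg1_ggInv (M N : Matrix (Fin g₀ ⊕ Fin g₀) (Fin g₀ ⊕ Fin g₀) R) : gg1 (ggInv M N) = M := by
  have h := (transpose_diagonalizer_mul_mul_diagonalizer (ggInv_mem M N)).symm.trans
    (transpose_diagonalizer_mul_ggInv_mul_diagonalizer M N)
  rw [(isUnit_of_invertible (2 : R)).smul_left_cancel, fromBlocks_inj] at h
  exact h.1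

theorem gg2_ggInv (M N : Matrix (Fin g₀ ⊕ Fin g₀) (Fin g₀ ⊕ Fin g₀) R) : gg2 (ggInv M N) = N := by
  have h := (transpose_diagonalizer_mul_mul_diagonalizer (ggInv_mem M N)).symm.trans
    (transpose_diagonalizer_mul_ggInv_mul_diagonalizer M N)
  rw [(isUnit_of_invertible (2 : R)).smul_left_cancel, fromBlocks_inj] at h
  exact h.2.2.2

theorem ggInv_gg {S : Matrix ι ι R} (hS : S ∈ Vspace g₀ R) : ggInv (gg1 S) (gg2 S) = S :=
  transpose_diagonalizer_mul_mul_diagonalizer_injective <| by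
    simp only [transpose_diagonalizer_mul_ggInv_mul_diagonalizer,
      transpose_diagonalizer_mul_mul_diagonalizer hS]

theorem mul_diagonalizer {S : Matrix ι ι R} (hS : S ∈ Vspace g₀ R) :
    S * V = V * fromBlocks (gg1 S) 0 0 (gg2 S) := by
  calc S * V = ⅟(2 : R) • ((V * Vᵀ) * S * V) := by
        rw [diagonalizer_mul_transpose_diagonalizer, Matrix.smul_mul, Matrix.smul_mul,
          Matrix.one_mul, smul_smul, invOf_mul_self, one_smul]
    _ = V * fromBlocks (gg1 S) 0 0 (gg2 S) := by
        rw [Matrix.mul_assoc V Vᵀ, Matrix.mul_assoc V,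
          transpose_diagonalizer_mul_mul_diagonalizer hS, Matrix.mul_smul, smul_smul,
          invOf_mul_self, one_smul]

theorem symplectic_iff {S : Matrix ι ι R} (hS : S ∈ Vspace g₀ R) :
    Sᵀ * Jstd (Fin g₀ ⊕ Fin g₀) R * S = Jstd (Fin g₀ ⊕ Fin g₀) R ↔
      (gg1 S)ᵀ * Jstd (Fin g₀) R * gg2 S = Jstd (Fin g₀) R := by
  have hconj : Vᵀ * (Sᵀ * Jstd _ R * S) * V = (2 : R) • fromBlocks 0
      ((gg1 S)ᵀ * Jstd (Fin g₀) R * gg2 S) ((gg2 S)ᵀ * Jstd (Fin g₀) R * gg1 S) 0 := by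
    calc Vᵀ * (Sᵀ * Jstd _ R * S) * V = (S * V)ᵀ * Jstd _ R * (S * V) := by
          simp only [transpose_mul, Matrix.mul_assoc]
      _ = (fromBlocks (gg1 S) 0 0 (gg2 S))ᵀ * (Vᵀ * Jstd _ R * V) *
            fromBlocks (gg1 S) 0 0 (gg2 S) := by
          simp only [mul_diagonalizer hS, transpose_mul, Matrix.mul_assoc]
      _ = _ := by
          rw [transpose_diagonalizer_mul_Jstd_mul_diagonalizer]
          simp [fromBlocks_transpose, fromBlocks_multiply, Matrix.mul_assoc]
  rw [← transpose_diagonalizer_mul_mul_diagonalizer_injective.eq_iff, hconj,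
    transpose_diagonalizer_mul_Jstd_mul_diagonalizer,
    (isUnit_of_invertible (2 : R)).smul_left_cancel, fromBlocks_inj]
  refine ⟨fun h => h.2.1, fun h => ⟨rfl, h, ?_, rfl⟩⟩
  have := congrArg transpose h
  rw [transpose_mul, transpose_mul, transpose_transpose, transpose_Jstd] at this
  simpa [Matrix.mul_assoc] using this

theorem posDef_iff {K : Type*} [Field K] [LinearOrder K] [StarRing K] [StarOrderedRing K]
    [TrivialStar K] {S : Matrix ι ι K} (hS : S ∈ Vspace g₀ K) :
    S.PosDef ↔ (gg1 S).PosDef ∧ (gg2 S).PosDef := by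
  rw [← IsUnit.posDef_star_left_conjugate_iff isUnit_diagonalizer, star_eq_conjTranspose,
    conjTranspose_eq_transpose_of_trivial, transpose_diagonalizer_mul_mul_diagonalizer hS,
    posDef_smul_iff two_pos, posDef_fromBlocks_zero_iff]

end Vspace

open Vspace in
theorem stmt14 (g₀ : ℕ) :
    (∀ σ : Matrix (Fin g₀ ⊕ Fin g₀) (Fin g₀ ⊕ Fin g₀) ℝ, σ.PosDef →
      ∀ S : Matrix ((Fin g₀ ⊕ Fin g₀) ⊕ (Fin g₀ ⊕ Fin g₀))
          ((Fin g₀ ⊕ Fin g₀) ⊕ (Fin g₀ ⊕ Fin g₀)) ℝ,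
        S ∈ Vspace g₀ ℝ →
        Sᵀ * Jstd (Fin g₀ ⊕ Fin g₀) ℝ * S = Jstd (Fin g₀ ⊕ Fin g₀) ℝ →
        gg1 S = σ → gg2 S = -(Jstd (Fin g₀) ℝ * (σ⁻¹)ᵀ * Jstd (Fin g₀) ℝ) →
        Sᵀ = S ∧ S.PosDef) ∧
    Set.BijOn gg1
      {S ∈ Vspace g₀ ℝ |
        Sᵀ * Jstd (Fin g₀ ⊕ Fin g₀) ℝ * S = Jstd (Fin g₀ ⊕ Fin g₀) ℝ ∧ S.PosDef}
      {σ : Matrix (Fin g₀ ⊕ Fin g₀) (Fin g₀ ⊕ Fin g₀) ℝ | σ.PosDef} := by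
  have hdual (σ : Matrix (Fin g₀ ⊕ Fin g₀) (Fin g₀ ⊕ Fin g₀) ℝ) (hσ : σ.PosDef) :
      (-(Jstd (Fin g₀) ℝ * (σ⁻¹)ᵀ * Jstd (Fin g₀) ℝ)).PosDef :=
    posDef_neg_Jstd_mul_mul_Jstd hσ.inv.transpose
  have hdet {σ : Matrix (Fin g₀ ⊕ Fin g₀) (Fin g₀ ⊕ Fin g₀) ℝ} (hσ : σ.PosDef) : IsUnit σ.det :=
    (isUnit_iff_isUnit_det σ).1 hσ.isUnit
  refine ⟨fun σ hσ S hS _ h1 h2 => ?_, fun S ⟨hS, _, hPD⟩ => ((posDef_iff hS).1 hPD).1, ?_, ?_⟩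
  · have hPD : S.PosDef := (posDef_iff hS).2 ⟨h1 ▸ hσ, h2 ▸ hdual σ hσ⟩
    exact ⟨isHermitian_iff_isSymm.1 hPD.1, hPD⟩
  · rintro S ⟨hS, hSJ, hPD⟩ S' ⟨hS', hSJ', -⟩ h
    have hσ := hdet ((posDef_iff hS).1 hPD).1
    rw [symplectic_iff hS, transpose_mul_Jstd_mul_eq_Jstd_iff hσ] at hSJ
    rw [symplectic_iff hS', ← h, transpose_mul_Jstd_mul_eq_Jstd_iff hσ] at hSJ'
    rw [← ggInv_gg hS, ← ggInv_gg hS', h, hSJ, hSJ', h]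
  · intro σ hσ
    refine ⟨ggInv σ (-(Jstd (Fin g₀) ℝ * (σ⁻¹)ᵀ * Jstd (Fin g₀) ℝ)),
      ⟨ggInv_mem _ _, ?_, (posDef_iff (ggInv_mem _ _)).2 ?_⟩, gg1_ggInv _ _⟩
    · rw [symplectic_iff (ggInv_mem _ _), gg1_ggInv, gg2_ggInv,
        transpose_mul_Jstd_mul_eq_Jstd_iff (hdet hσ)]
    · rw [gg1_ggInv, gg2_ggInv]
      exact ⟨hσ, hdual σ hσ⟩
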